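/- arXiv:1107.4231 — 8 statements merged into one kernel-verified Lean document; each statement's English description precedes it below -/
import Mathlib

section
/- Let Π be an antisymmetric matrix field, C a Casimir for Π, H smooth, G = ∇H⊗∇H − ‖∇H‖² I. If x_e satisfies ∇C(x_e) ≠ 0 and Π(x_e)∇H(x_e) + G(x_e)∇C(x_e) = 0, then ∇H(x_e) and ∇C(x_e) are linearly dependent. -/
open RealInnerProductSpace

/-- If `∇C(x_e) ≠ 0` and `x_e` is an equilibrium of the dissipated system
`ẋ = Π∇H + G∇C` (with `Π` antisymmetric, `C` a Casimir, `G = ∇H⊗∇H − ‖∇H‖² I`), then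
`∇H(x_e)` and `∇C(x_e)` are linearly dependent. -/
theorem equilibrium_imp_gradients_dependent
    (n : ℕ) (H C : EuclideanSpace ℝ (Fin n) → ℝ)
    (hH : ContDiff ℝ (⊤ : ℕ∞) H) (hC : ContDiff ℝ (⊤ : ℕ∞) C)
    (Pi : EuclideanSpace ℝ (Fin n) → EuclideanSpace ℝ (Fin n) →ₗ[ℝ] EuclideanSpace ℝ (Fin n))
    (hPi : ∀ p v w, ⟪Pi p v, w⟫ = -⟪v, Pi p w⟫)
    (hCasimir : ∀ p, Pi p (gradient C p) = 0)
    (xe : EuclideanSpace ℝ (Fin n))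
    (hgrad : gradient C xe ≠ 0)
    (heq : Pi xe (gradient H xe) +
      (⟪gradient H xe, gradient C xe⟫ • gradient H xe
        - ‖gradient H xe‖ ^ 2 • gradient C xe) = 0) :
    ¬ LinearIndependent ℝ ![gradient H xe, gradient C xe] := by
  set u := gradient H xe with hu
  set v := gradient C xe with hv
  -- Dot the equilibrium equation with v
  have h0 : ⟪Pi xe u, v⟫ = 0 := by
    rw [hPi, hCasimir]
    simp
  have hdot : ⟪u, v⟫ ^ 2 = ‖u‖ ^ 2 * ‖v‖ ^ 2 := by
    have := congrArg (fun w => ⟪w, v⟫) heq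
    simp only [inner_add_left, inner_sub_left, inner_smul_left, inner_zero_left,
      starRingEnd_apply, star_trivial, h0, real_inner_self_eq_norm_sq] at this
    nlinarith [this]
  have habs : |⟪u, v⟫| = ‖u‖ * ‖v‖ := by
    have h1 : (|⟪u, v⟫|) ^ 2 = (‖u‖ * ‖v‖) ^ 2 := by
      rw [sq_abs]; nlinarith [hdot]
    have := abs_nonneg (⟪u, v⟫)
    nlinarith [mul_nonneg (norm_nonneg u) (norm_nonneg v)]
  -- Equality in Cauchy–Schwarz gives dependence
  have hdep : ‖v‖ • u = ‖u‖ • v ∨ ‖v‖ • u = -(‖u‖ • v) := by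
    rcases abs_cases (⟪u, v⟫) with ⟨he, _⟩ | ⟨he, _⟩
    · left
      exact inner_eq_norm_mul_iff_real.mp (by rw [← he, habs])
    · right
      have : ⟪u, -v⟫ = ‖u‖ * ‖-v‖ := by
        rw [inner_neg_right, norm_neg]
        nlinarith [habs, he]
      have h2 := inner_eq_norm_mul_iff_real.mp this
      rw [norm_neg] at h2
      rw [h2, smul_neg]
  intro hli
  rcases hdep with h | h
  · have := (LinearIndependent.pair_iff.mp hli) ‖v‖ (-‖u‖) (by
      rw [neg_smul, ← sub_eq_add_neg, sub_eq_zero]; exact h)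
    exact hgrad (norm_eq_zero.mp this.1)
  · have := (LinearIndependent.pair_iff.mp hli) ‖v‖ ‖u‖ (by
      rw [h]; simp)
    exact hgrad (norm_eq_zero.mp this.1)
end

section
/- Let Π be an antisymmetric matrix field, C a Casimir for Π, H smooth, G = ∇H⊗∇H − ‖∇H‖² I. Every equilibrium of the dissipated system ẋ = Π∇H + G∇C is an equilibrium of the unperturbed Hamiltonian system ẋ = Π∇H; i.e., Π(x_e)∇H(x_e) + G(x_e)∇C(x_e) = 0 implies Π(x_e)∇H(x_e) = 0. -/
open RealInnerProductSpace

/-- Every equilibrium of the dissipated system `ẋ = Π∇H + G∇C` is an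
equilibrium of the unperturbed Hamiltonian system `ẋ = Π∇H` (with `Π` antisymmetric,
`C` a Casimir, `G = ∇H⊗∇H − ‖∇H‖² I`). -/
theorem dissipated_equilibrium_is_hamiltonian_equilibrium
    (n : ℕ) (H C : EuclideanSpace ℝ (Fin n) → ℝ)
    (hH : ContDiff ℝ (⊤ : ℕ∞) H) (hC : ContDiff ℝ (⊤ : ℕ∞) C)
    (Pi : EuclideanSpace ℝ (Fin n) → EuclideanSpace ℝ (Fin n) →ₗ[ℝ] EuclideanSpace ℝ (Fin n))
    (hPi : ∀ p v w, ⟪Pi p v, w⟫ = -⟪v, Pi p w⟫)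
    (hCasimir : ∀ p, Pi p (gradient C p) = 0)
    (xe : EuclideanSpace ℝ (Fin n))
    (heq : Pi xe (gradient H xe) +
      (⟪gradient H xe, gradient C xe⟫ • gradient H xe
        - ‖gradient H xe‖ ^ 2 • gradient C xe) = 0) :
    Pi xe (gradient H xe) = 0 := by
  set h := gradient H xe
  set c := gradient C xe
  set P := Pi xe
  -- ⟪P h, h⟫ = 0 by antisymmetry
  have hPhh : ⟪P h, h⟫ = 0 := by
    have := hPi xe h h
    have hsymm : ⟪h, P h⟫ = ⟪P h, h⟫ := real_inner_comm _ _
    linarith [this, hsymm]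
  -- ⟪P h, c⟫ = 0 by antisymmetry + Casimir
  have hPhc : ⟪P h, c⟫ = 0 := by
    have := hPi xe h c
    rw [hCasimir xe] at this
    simpa using this
  -- express P h
  have hPh : P h = ‖h‖ ^ 2 • c - ⟪h, c⟫ • h := by
    have : P h = -(⟪h, c⟫ • h - ‖h‖ ^ 2 • c) := by
      rw [eq_neg_iff_add_eq_zero]; exact heq
    rw [this]; abel
  have hnorm : ⟪P h, P h⟫ = 0 := by
    nth_rewrite 2 [hPh]
    rw [inner_sub_right, real_inner_smul_right, real_inner_smul_right, hPhh, hPhc]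
    ring
  exact inner_self_eq_zero.mp hnorm
end

section
/- Let Π be antisymmetric, C a Casimir for Π, H smooth, G = ∇H⊗∇H − ‖∇H‖² I, and ψ : ℝ² → ℝ smooth. Then along solutions of ẋ = Π∇H + G∇C, the function L(x) = ψ(H(x), C(x)) satisfies d/dt L(x(t)) = (∂ψ/∂C)(H(x),C(x)) · (∇C(x)·G(x)∇C(x)). -/
open RealInnerProductSpace

/-- Along solutions of `ẋ = Π∇H + G∇C` (with `Π` antisymmetric, `C` a Casimir,
`G = ∇H⊗∇H − ‖∇H‖² I`), the function `L(x) = ψ(H(x), C(x))` satisfies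
`d/dt L(x(t)) = (∂ψ/∂C)(H(x),C(x)) · (∇C·G∇C)`. -/
theorem deriv_psi_along_dissipated_flow
    (n : ℕ) (H C : EuclideanSpace ℝ (Fin n) → ℝ)
    (hH : ContDiff ℝ (⊤ : ℕ∞) H) (hC : ContDiff ℝ (⊤ : ℕ∞) C)
    (ψ : ℝ × ℝ → ℝ) (hψ : ContDiff ℝ (⊤ : ℕ∞) ψ)
    (Pi : EuclideanSpace ℝ (Fin n) → EuclideanSpace ℝ (Fin n) →ₗ[ℝ] EuclideanSpace ℝ (Fin n))
    (hPi : ∀ p v w, ⟪Pi p v, w⟫ = -⟪v, Pi p w⟫)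
    (hCasimir : ∀ p, Pi p (gradient C p) = 0)
    (x : ℝ → EuclideanSpace ℝ (Fin n))
    (hx : ∀ t, HasDerivAt x
      (Pi (x t) (gradient H (x t)) +
        (⟪gradient H (x t), gradient C (x t)⟫ • gradient H (x t)
          - ‖gradient H (x t)‖ ^ 2 • gradient C (x t))) t) :
    ∀ t, HasDerivAt (fun s => ψ (H (x s), C (x s)))
      (fderiv ℝ ψ (H (x t), C (x t)) (0, 1) *
        ⟪gradient C (x t), ⟪gradient H (x t), gradient C (x t)⟫ • gradient H (x t)
          - ‖gradient H (x t)‖ ^ 2 • gradient C (x t)⟫) t := by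
  intro t
  set gH := gradient H (x t) with hgH
  set gC := gradient C (x t) with hgC
  set v := Pi (x t) gH + (⟪gH, gC⟫ • gH - ‖gH‖ ^ 2 • gC) with hv
  have hHd : HasDerivAt (fun s => H (x s)) ⟪gH, v⟫ t := by
    have := ((hH.differentiable (by simp) (x t)).hasGradientAt).hasFDerivAt.comp_hasDerivAt t (hx t)
    simp only [InnerProductSpace.toDual_apply_apply] at this; exact this
  have hCd : HasDerivAt (fun s => C (x s)) ⟪gC, v⟫ t := by
    have := ((hC.differentiable (by simp) (x t)).hasGradientAt).hasFDerivAt.comp_hasDerivAt t (hx t)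
    simp only [InnerProductSpace.toDual_apply_apply] at this; exact this
  have hHv : ⟪gH, v⟫ = 0 := by
    have h1 : ⟪gH, Pi (x t) gH⟫ = 0 := by
      have := hPi (x t) gH gH
      rw [real_inner_comm] at this
      linarith
    rw [hv, inner_add_right, h1, inner_sub_right, inner_smul_right, inner_smul_right,
      real_inner_self_eq_norm_sq]
    ring
  have hCv : ⟪gC, v⟫ = ⟪gC, ⟪gH, gC⟫ • gH - ‖gH‖ ^ 2 • gC⟫ := by
    have h1 : ⟪gC, Pi (x t) gH⟫ = 0 := by
      have := hPi (x t) gC gH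
      rw [hgC, hCasimir (x t), inner_zero_left] at this
      linarith
    rw [hv, inner_add_right, h1, zero_add]
  have hprod : HasDerivAt (fun s => (H (x s), C (x s))) (⟪gH, v⟫, ⟪gC, v⟫) t := hHd.prodMk hCd
  have hψd := ((hψ.differentiable (by simp)) (H (x t), C (x t))).hasFDerivAt
  have hcomp := hψd.comp_hasDerivAt t hprod
  refine hcomp.congr_deriv ?_.symm
  rw [hHv, hCv]
  have : ((0 : ℝ), ⟪gC, ⟪gH, gC⟫ • gH - ‖gH‖ ^ 2 • gC⟫) =
      ⟪gC, ⟪gH, gC⟫ • gH - ‖gH‖ ^ 2 • gC⟫ • ((0 : ℝ), (1 : ℝ)) := by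
    simp [Prod.smul_mk]
  rw [this, map_smul, smul_eq_mul, mul_comm]
end

section
/- Under the hypotheses above, if additionally ∂ψ/∂C(H(x),C(x)) > 0 on a neighborhood U of x_e, then L(x) = ψ(H(x),C(x)) − ψ(H(x_e),C(x_e)) satisfies d/dt L(x(t)) ≤ 0 for solutions in U, with equality at x exactly when ∇C(x) and ∇H(x) are linearly dependent. -/
open RealInnerProductSpace

private lemma cs_eq_iff {F : Type*} [NormedAddCommGroup F] [InnerProductSpace ℝ F]
    (a b : F) :
    ⟪a, b⟫ ^ 2 - ‖a‖ ^ 2 * ‖b‖ ^ 2 = 0 ↔ ¬ LinearIndependent ℝ ![a, b] := by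
  rw [linearIndependent_fin2]
  simp only [Matrix.cons_val_one, Matrix.head_cons, Matrix.cons_val_zero, not_and, not_forall,
    not_not, ne_eq]
  by_cases hb : b = 0
  · simp [hb]
  by_cases ha : a = 0
  · constructor
    · intro _ _; exact ⟨0, by simp [ha]⟩
    · intro _; simp [ha]
  constructor
  · intro h _
    have habs : ‖⟪a, b⟫‖ = ‖a‖ * ‖b‖ := by
      have h1 : ⟪a, b⟫ ^ 2 = (‖a‖ * ‖b‖) ^ 2 := by ring_nf; ring_nf at h; linarith
      have := abs_real_inner_le_norm a b
      have h2 : |⟪a, b⟫| = ‖a‖ * ‖b‖ := by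
        nlinarith [abs_nonneg (⟪a, b⟫), sq_abs (⟪a, b⟫), mul_nonneg (norm_nonneg a) (norm_nonneg b)]
      simpa [Real.norm_eq_abs] using h2
    obtain ⟨r, hr, rfl⟩ := (norm_inner_eq_norm_iff (𝕜 := ℝ) ha hb).1 habs
    exact ⟨r⁻¹, by rw [smul_smul, inv_mul_cancel₀ hr, one_smul]⟩
  · rintro h
    obtain ⟨r, hr⟩ := h hb
    subst hr
    have : ⟪r • b, b⟫ = r * ‖b‖ ^ 2 := by
      rw [real_inner_smul_left, real_inner_self_eq_norm_sq]
    rw [this, norm_smul]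
    simp [mul_pow, Real.norm_eq_abs, sq_abs]
    ring

private lemma fderiv_inner_grad {F : Type*} [NormedAddCommGroup F] [InnerProductSpace ℝ F]
    [CompleteSpace F] (f : F → ℝ) (p : F) (v : F) :
    fderiv ℝ f p v = ⟪gradient f p, v⟫ := by
  rw [gradient, InnerProductSpace.toDual_symm_apply]

/-- If moreover `∂ψ/∂C(H(x),C(x)) > 0` on a neighborhood `U` of `x_e`, then
`L(x) = ψ(H(x),C(x)) − ψ(H(x_e),C(x_e))` satisfies `d/dt L(x(t)) ≤ 0` for solutions in `U`,
with equality at `x` exactly when `∇C(x)` and `∇H(x)` are linearly dependent. -/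
theorem lyapunov_decreases_along_dissipated_flow
    (n : ℕ) (H C : EuclideanSpace ℝ (Fin n) → ℝ)
    (hH : ContDiff ℝ (⊤ : ℕ∞) H) (hC : ContDiff ℝ (⊤ : ℕ∞) C)
    (ψ : ℝ × ℝ → ℝ) (hψ : ContDiff ℝ (⊤ : ℕ∞) ψ)
    (Pi : EuclideanSpace ℝ (Fin n) → EuclideanSpace ℝ (Fin n) →ₗ[ℝ] EuclideanSpace ℝ (Fin n))
    (hPi : ∀ p v w, ⟪Pi p v, w⟫ = -⟪v, Pi p w⟫)
    (hCasimir : ∀ p, Pi p (gradient C p) = 0)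
    (xe : EuclideanSpace ℝ (Fin n))
    (U : Set (EuclideanSpace ℝ (Fin n))) (hU : U ∈ nhds xe)
    (hpos : ∀ p ∈ U, 0 < fderiv ℝ ψ (H p, C p) (0, 1))
    (x : ℝ → EuclideanSpace ℝ (Fin n))
    (hx : ∀ t, HasDerivAt x
      (Pi (x t) (gradient H (x t)) +
        (⟪gradient H (x t), gradient C (x t)⟫ • gradient H (x t)
          - ‖gradient H (x t)‖ ^ 2 • gradient C (x t))) t) :
    ∀ t, x t ∈ U →
      HasDerivAt (fun s => ψ (H (x s), C (x s)) - ψ (H xe, C xe))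
        (fderiv ℝ ψ (H (x t), C (x t)) (0, 1) *
          ⟪gradient C (x t), ⟪gradient H (x t), gradient C (x t)⟫ • gradient H (x t)
            - ‖gradient H (x t)‖ ^ 2 • gradient C (x t)⟫) t
      ∧ fderiv ℝ ψ (H (x t), C (x t)) (0, 1) *
          ⟪gradient C (x t), ⟪gradient H (x t), gradient C (x t)⟫ • gradient H (x t)
            - ‖gradient H (x t)‖ ^ 2 • gradient C (x t)⟫ ≤ 0
      ∧ (fderiv ℝ ψ (H (x t), C (x t)) (0, 1) *
          ⟪gradient C (x t), ⟪gradient H (x t), gradient C (x t)⟫ • gradient H (x t)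
            - ‖gradient H (x t)‖ ^ 2 • gradient C (x t)⟫ = 0
          ↔ ¬ LinearIndependent ℝ ![gradient C (x t), gradient H (x t)]) := by
  intro t htU
  set a := gradient C (x t) with ha
  set b := gradient H (x t) with hb
  set v := Pi (x t) b + (⟪b, a⟫ • b - ‖b‖ ^ 2 • a) with hv
  set q : ℝ := ⟪a, ⟪b, a⟫ • b - ‖b‖ ^ 2 • a⟫ with hq
  set D : ℝ := fderiv ℝ ψ (H (x t), C (x t)) (0, 1) with hD
  have hDpos : 0 < D := hpos _ htU
  -- q as an explicit expression
  have hq' : q = ⟪a, b⟫ ^ 2 - ‖a‖ ^ 2 * ‖b‖ ^ 2 := by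
    rw [hq, inner_sub_right, real_inner_smul_right, real_inner_smul_right,
      real_inner_self_eq_norm_sq, real_inner_comm a b]
    ring
  -- q ≤ 0
  have hqle : q ≤ 0 := by
    rw [hq']
    have := real_inner_mul_inner_self_le a b
    rw [real_inner_self_eq_norm_sq, real_inner_self_eq_norm_sq] at this
    nlinarith
  -- derivatives of H∘x and C∘x
  have hHd : HasDerivAt (fun s => H (x s)) 0 t := by
    have h0 : ⟪b, Pi (x t) b⟫ = 0 := by
      have h1 := hPi (x t) b b
      have h2 := real_inner_comm (Pi (x t) b) b
      linarith
    have := ((hH.differentiable (by simp) (x t)).hasFDerivAt).comp_hasDerivAt t (hx t)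
    have heq : fderiv ℝ H (x t) v = 0 := by
      rw [fderiv_inner_grad, ← hb, hv, inner_add_right, inner_sub_right,
        real_inner_smul_right, real_inner_smul_right, real_inner_self_eq_norm_sq, h0]
      ring
    rwa [heq] at this
  have hCd : HasDerivAt (fun s => C (x s)) q t := by
    have h0 : ⟪a, Pi (x t) b⟫ = 0 := by
      have h1 := hPi (x t) a b
      rw [ha, hCasimir] at h1
      simp only [inner_zero_left] at h1
      linarith
    have := ((hC.differentiable (by simp) (x t)).hasFDerivAt).comp_hasDerivAt t (hx t)
    have heq : fderiv ℝ C (x t) v = q := by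
      rw [fderiv_inner_grad, ← ha, hv, inner_add_right, h0, hq]
      ring
    rwa [heq] at this
  have hpair : HasDerivAt (fun s => (H (x s), C (x s))) ((0 : ℝ), q) t := hHd.prodMk hCd
  have hψd := ((hψ.differentiable (by simp) (H (x t), C (x t))).hasFDerivAt).comp_hasDerivAt t hpair
  have hval : fderiv ℝ ψ (H (x t), C (x t)) (0, q) = D * q := by
    have : ((0 : ℝ), q) = q • ((0 : ℝ), (1 : ℝ)) := by simp [Prod.smul_mk]
    rw [this, (fderiv ℝ ψ (H (x t), C (x t))).map_smul, smul_eq_mul, hD, mul_comm]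
  rw [hval] at hψd
  refine ⟨hψd.sub_const _, mul_nonpos_of_nonneg_of_nonpos hDpos.le hqle, ?_⟩
  rw [mul_eq_zero, or_iff_right hDpos.ne', hq', cs_eq_iff]
end

section
/- For the dissipated rigid body system ξ⁰: ẋ = Π₋∇H + G∇C₀ with I₁ > I₂ > I₃ > 0, the set of equilibria of ξ⁰ coincides with the set of equilibria of the free rigid body (the union of the three coordinate axes). -/
/-!
Write `Ω = diag(1/I₁, 1/I₂, 1/I₃)` and `w = x × Ωx`, so that the free rigid body is `ẋ = w` and
the dissipated one is `ẋ = w + w × Ωx`. Dotting the dissipated field with `x` kills `w` and turns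
the triple product `x · (w × Ωx)` into `-|w|²`; hence an equilibrium of `ξ⁰` has `w = 0`, i.e. it
is an equilibrium of the free rigid body. Since the moments of inertia are distinct, `x × Ωx = 0`
means that `x` lies on a coordinate axis.
-/

open Matrix Function

theorem cross_add_cross_cross_eq_zero_iff {R : Type*} [CommRing R] [LinearOrder R]
    [IsStrictOrderedRing R] (u v : Fin 3 → R) :
    v ⨯₃ u + (v ⨯₃ u) ⨯₃ u = 0 ↔ v ⨯₃ u = 0 := by
  refine ⟨fun h => ?_, fun h => by simp [h]⟩
  set w := v ⨯₃ u
  have hdot : v ⬝ᵥ (w + w ⨯₃ u) = -(w ⬝ᵥ w) := by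
    rw [dotProduct_add, dot_self_cross, zero_add, triple_product_permutation, ← cross_anticomm,
      dotProduct_neg]
  rw [h, dotProduct_zero, eq_comm, neg_eq_zero] at hdot
  exact dotProduct_self_eq_zero.mp hdot

theorem cross_mul_self_eq_zero_iff {R : Type*} [CommRing R] [IsDomain R] {d : Fin 3 → R}
    (hd : Injective d) (v : Fin 3 → R) :
    v ⨯₃ (d * v) = 0 ↔
      (v 1 = 0 ∧ v 2 = 0) ∨ (v 0 = 0 ∧ v 2 = 0) ∨ (v 0 = 0 ∧ v 1 = 0) := by
  have hcross : v ⨯₃ (d * v) =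
      ![(d 2 - d 1) * (v 1 * v 2), (d 0 - d 2) * (v 2 * v 0), (d 1 - d 0) * (v 0 * v 1)] := by
    ext i; fin_cases i <;> simp [cross_apply] <;> ring
  have h01 : d 1 - d 0 ≠ 0 := sub_ne_zero.mpr (hd.ne (by decide))
  have h02 : d 0 - d 2 ≠ 0 := sub_ne_zero.mpr (hd.ne (by decide))
  have h12 : d 2 - d 1 ≠ 0 := sub_ne_zero.mpr (hd.ne (by decide))
  rw [hcross]
  simp only [cons_eq_zero_iff, mul_eq_zero, h01, h02, h12, false_or, zero_empty, and_true]
  tauto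

theorem dissipated_rigid_body_equilibria_general
    (I1 I2 I3 : ℝ) (h12 : I1 > I2) (h23 : I2 > I3) :
    {p : ℝ × ℝ × ℝ |
        (1/I3 - 1/I2) * p.2.1 * p.2.2
          + p.1 * ((1/I1 - 1/I2) * p.2.1^2/I2 + (1/I1 - 1/I3) * p.2.2^2/I3) = 0 ∧
        (1/I1 - 1/I3) * p.1 * p.2.2
          + p.2.1 * ((1/I2 - 1/I1) * p.1^2/I1 + (1/I2 - 1/I3) * p.2.2^2/I3) = 0 ∧
        (1/I2 - 1/I1) * p.1 * p.2.1
          + p.2.2 * ((1/I3 - 1/I1) * p.1^2/I1 + (1/I3 - 1/I2) * p.2.1^2/I2) = 0}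
      = {p : ℝ × ℝ × ℝ | p.2.1 = 0 ∧ p.2.2 = 0}
        ∪ {p : ℝ × ℝ × ℝ | p.1 = 0 ∧ p.2.2 = 0}
        ∪ {p : ℝ × ℝ × ℝ | p.1 = 0 ∧ p.2.1 = 0} := by
  have hI : StrictAnti ![I1, I2, I3] :=
    Fin.strictAnti_iff_succ_lt.mpr fun i => by fin_cases i <;> simpa
  set d : Fin 3 → ℝ := fun i => (![I1, I2, I3] i)⁻¹
  have hd : Injective d := inv_injective.comp hI.injective
  ext ⟨x, y, z⟩
  set v : Fin 3 → ℝ := ![x, y, z]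
  have hfield : v ⨯₃ (d * v) + (v ⨯₃ (d * v)) ⨯₃ (d * v) =
      ![(1/I3 - 1/I2) * y * z + x * ((1/I1 - 1/I2) * y^2/I2 + (1/I1 - 1/I3) * z^2/I3),
        (1/I1 - 1/I3) * x * z + y * ((1/I2 - 1/I1) * x^2/I1 + (1/I2 - 1/I3) * z^2/I3),
        (1/I2 - 1/I1) * x * y + z * ((1/I3 - 1/I1) * x^2/I1 + (1/I3 - 1/I2) * y^2/I2)] := by
    ext i; fin_cases i <;> simp [cross_apply, v, d] <;> ring
  have hequilibria := (cross_add_cross_cross_eq_zero_iff (d * v) v).trans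
    (cross_mul_self_eq_zero_iff hd v)
  rw [hfield] at hequilibria
  simpa [v, or_assoc] using hequilibria

/-- For the dissipated rigid body system
`ξ⁰ : ẋᵢ = (Euler term)ᵢ + u⁰ᵢ` with `I₁ > I₂ > I₃ > 0`, the set of equilibria of `ξ⁰`
coincides with the set of equilibria of the free rigid body (the union of the three
coordinate axes). -/
theorem dissipated_rigid_body_equilibria
    (I1 I2 I3 : ℝ) (h12 : I1 > I2) (h23 : I2 > I3) (h3 : I3 > 0) :
    {p : ℝ × ℝ × ℝ |
        (1/I3 - 1/I2) * p.2.1 * p.2.2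
          + p.1 * ((1/I1 - 1/I2) * p.2.1^2/I2 + (1/I1 - 1/I3) * p.2.2^2/I3) = 0 ∧
        (1/I1 - 1/I3) * p.1 * p.2.2
          + p.2.1 * ((1/I2 - 1/I1) * p.1^2/I1 + (1/I2 - 1/I3) * p.2.2^2/I3) = 0 ∧
        (1/I2 - 1/I1) * p.1 * p.2.1
          + p.2.2 * ((1/I3 - 1/I1) * p.1^2/I1 + (1/I3 - 1/I2) * p.2.1^2/I2) = 0}
      = {p : ℝ × ℝ × ℝ | p.2.1 = 0 ∧ p.2.2 = 0}
        ∪ {p : ℝ × ℝ × ℝ | p.1 = 0 ∧ p.2.2 = 0}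
        ∪ {p : ℝ × ℝ × ℝ | p.1 = 0 ∧ p.2.1 = 0} :=
  dissipated_rigid_body_equilibria_general I1 I2 I3 h12 h23
end

section
/- Let I₁ > I₂ > I₃ > 0, M₀ ≠ 0, x_e = (0,0,M₀), and L(x) = (½‖x‖² − M₀²/2)² + ½‖x‖² − (I₃/2)(x₁²/I₁ + x₂²/I₂ + x₃²/I₃). Then L(x_e) = 0, ∇L(x_e) = 0, and the Hessian of L at x_e is the diagonal matrix diag(1 − I₃/I₁, 1 − I₃/I₂, 2M₀²), which is positive definite; hence x_e is a strict local minimum of L. -/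
/-!
Writing `C₀ = ‖x‖²/2`, the `x₃²` terms cancel and
`L = (C₀ - M₀²/2)² + ½(1 - I₃/I₁) x₁² + ½(1 - I₃/I₂) x₂²`, a sum of nonnegative terms that
vanishes only where `x₁ = x₂ = 0` and `‖x‖ = |M₀|`, i.e. at `±x_e`; hence `x_e` is a strict
local minimum. At a zero of `g = C₀ - M₀²/2` the Hessian of `g²` is `2 ∇g ⊗ ∇g = 2 x_e x_eᵀ`,
which supplies the entry `2M₀²`.
-/

open InnerProductSpace

theorem hasFDerivAt_norm_sq_half {F : Type*} [NormedAddCommGroup F] [InnerProductSpace ℝ F]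
    (x : F) : HasFDerivAt (fun y : F => ‖y‖ ^ 2 / 2) (innerSL ℝ x) x := by
  have h := (hasStrictFDerivAt_norm_sq x).hasFDerivAt.mul_const (1 / 2 : ℝ)
  simp only [mul_one_div] at h
  exact h.congr_fderiv (by ext; simp)

section EnergyCasimir

variable {ι : Type*} [Fintype ι]

noncomputable def energyCasimir (c : ℝ) (a : ι → ℝ) (x : EuclideanSpace ℝ ι) : ℝ :=
  (‖x‖ ^ 2 / 2 - c) ^ 2 + ∑ i, a i * x i ^ 2 / 2

theorem hasFDerivAt_energyCasimir (c : ℝ) (a : ι → ℝ) (x : EuclideanSpace ℝ ι) :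
    HasFDerivAt (energyCasimir c a)
      ((2 * (‖x‖ ^ 2 / 2 - c)) • innerSL ℝ x + ∑ i, (a i * x i) • EuclideanSpace.proj i) x := by
  have hsq := ((hasFDerivAt_norm_sq_half x).sub_const c).pow 2
  have hquad := HasFDerivAt.fun_sum (u := Finset.univ) fun i _ =>
    (((EuclideanSpace.proj i : StrongDual ℝ (EuclideanSpace ℝ ι)).hasFDerivAt (x := x)).pow
      2).const_mul (a i / 2)
  refine ((hsq.fun_add hquad).congr_fderiv ?_).congr_of_eventuallyEq (.of_forall fun y => ?_)
  · ext v
    simp only [Nat.add_one_sub_one, pow_one, nsmul_eq_mul, Nat.cast_ofNat, PiLp.proj_apply,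
      add_apply, smul_apply, coe_innerSL_apply, smul_eq_mul, sum_apply, add_right_inj]
    exact Finset.sum_congr rfl fun i _ => by ring
  · simp only [energyCasimir, PiLp.proj_apply, add_right_inj]
    exact Finset.sum_congr rfl fun i _ => by ring

theorem fderiv_energyCasimir (c : ℝ) (a : ι → ℝ) :
    fderiv ℝ (energyCasimir c a) = fun x =>
      (2 * (‖x‖ ^ 2 / 2 - c)) • innerSL ℝ x + ∑ i, (a i * x i) • EuclideanSpace.proj i :=
  funext fun x => (hasFDerivAt_energyCasimir c a x).fderiv

theorem iteratedFDeriv_two_energyCasimir (c : ℝ) (a : ι → ℝ) (x u v : EuclideanSpace ℝ ι) :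
    iteratedFDeriv ℝ 2 (energyCasimir c a) x ![u, v] =
      2 * (‖x‖ ^ 2 / 2 - c) * ⟪u, v⟫_ℝ + 2 * ⟪x, u⟫_ℝ * ⟪x, v⟫_ℝ + ∑ i, a i * u i * v i := by
  -- `innerSL ℝ` is semilinear for `starRingEnd ℝ`; the ascription views it as a linear map.
  have hsq := (((hasFDerivAt_norm_sq_half x).sub_const c).const_mul 2).fun_smul
    (innerSL ℝ : EuclideanSpace ℝ ι →L[ℝ] _ →L[ℝ] ℝ).hasFDerivAt
  have hquad := HasFDerivAt.fun_sum (u := Finset.univ) fun i _ =>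
    (((EuclideanSpace.proj i : StrongDual ℝ (EuclideanSpace ℝ ι)).hasFDerivAt (x := x)).const_mul
      (a i)).smul_const (EuclideanSpace.proj i : StrongDual ℝ (EuclideanSpace ℝ ι))
  simp only [PiLp.proj_apply] at hquad
  rw [iteratedFDeriv_two_apply, fderiv_energyCasimir, (hsq.fun_add hquad).fderiv]
  simp only [add_apply, smul_apply, ContinuousLinearMap.smulRight_apply, coe_innerSL_apply,
    smul_eq_mul, sum_apply, PiLp.proj_apply, Matrix.cons_val_zero, Matrix.cons_val_one,
    Matrix.cons_val_fin_one, add_left_inj]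
  rfl

theorem iteratedFDeriv_two_energyCasimir_single [DecidableEq ι] {c : ℝ} (a : ι → ℝ)
    {x : EuclideanSpace ℝ ι} (hx : ‖x‖ ^ 2 / 2 = c) (i j : ι) :
    iteratedFDeriv ℝ 2 (energyCasimir c a) x
        ![EuclideanSpace.single i 1, EuclideanSpace.single j 1] =
      2 * x i * x j + Matrix.diagonal a i j := by
  rw [iteratedFDeriv_two_energyCasimir, hx]
  rcases eq_or_ne i j with rfl | hij
  · simp [EuclideanSpace.inner_single_right]
  · simp [EuclideanSpace.inner_single_right, hij, hij.symm]

theorem fderiv_energyCasimir_eq_zero {c : ℝ} {a : ι → ℝ} {x : EuclideanSpace ℝ ι}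
    (hx : ‖x‖ ^ 2 / 2 = c) (ha : ∀ i, a i * x i = 0) : fderiv ℝ (energyCasimir c a) x = 0 := by
  simp [fderiv_energyCasimir, hx, ha]

theorem energyCasimir_nonneg {a : ι → ℝ} (ha : ∀ i, 0 ≤ a i) (c : ℝ) (x : EuclideanSpace ℝ ι) :
    0 ≤ energyCasimir c a x :=
  add_nonneg (sq_nonneg _) (Finset.sum_nonneg fun i _ => by have := ha i; positivity)

theorem energyCasimir_eq_zero_iff {a : ι → ℝ} (ha : ∀ i, 0 ≤ a i) {c : ℝ}
    {x : EuclideanSpace ℝ ι} :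
    energyCasimir c a x = 0 ↔ ‖x‖ ^ 2 / 2 = c ∧ ∀ i, a i * x i ^ 2 = 0 := by
  have hterm : ∀ i ∈ Finset.univ, 0 ≤ a i * x i ^ 2 / 2 := fun i _ => by
    have := ha i; positivity
  rw [energyCasimir, add_eq_zero_iff_of_nonneg (sq_nonneg _) (Finset.sum_nonneg hterm),
    Finset.sum_eq_zero_iff_of_nonneg hterm, sq_eq_zero_iff, sub_eq_zero]
  simp

end EnergyCasimir

theorem energyCasimir_pos_of_ne {A B M : ℝ} (hA : 0 < A) (hB : 0 < B)
    {x : EuclideanSpace ℝ (Fin 3)} (h₁ : x ≠ !₂[0, 0, M]) (h₂ : x ≠ -!₂[0, 0, M]) :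
    0 < energyCasimir (M ^ 2 / 2) ![A, B, 0] x := by
  have ha : ∀ i, 0 ≤ ![A, B, 0] i := fun i => by fin_cases i <;> simp [hA.le, hB.le]
  refine (energyCasimir_nonneg ha _ _).lt_of_ne' fun h => ?_
  obtain ⟨hnorm, hq⟩ := (energyCasimir_eq_zero_iff ha).1 h
  have hx0 : x 0 = 0 := by simpa [hA.ne'] using hq 0
  have hx1 : x 1 = 0 := by simpa [hB.ne'] using hq 1
  have hx2 : x 2 ^ 2 = M ^ 2 := by
    simp [EuclideanSpace.norm_sq_eq, Fin.sum_univ_three, hx0, hx1] at hnorm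
    linarith
  rcases sq_eq_sq_iff_eq_or_eq_neg.1 hx2 with hx2 | hx2
  · exact h₁ (by ext i; fin_cases i <;> simp [hx0, hx1, hx2])
  · exact h₂ (by ext i; fin_cases i <;> simp [hx0, hx1, hx2])

theorem rigidBodyLyapunov_eq_energyCasimir {I1 I2 I3 : ℝ} (h1 : I1 ≠ 0) (h2 : I2 ≠ 0)
    (h3 : I3 ≠ 0) (M0 : ℝ) :
    (fun x : EuclideanSpace ℝ (Fin 3) => ((1/2) * ‖x‖ ^ 2 - M0 ^ 2 / 2) ^ 2 + (1/2) * ‖x‖ ^ 2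
        - (I3/2) * ((x 0) ^ 2 / I1 + (x 1) ^ 2 / I2 + (x 2) ^ 2 / I3)) =
      energyCasimir (M0 ^ 2 / 2) ![1 - I3 / I1, 1 - I3 / I2, 0] := by
  funext x
  simp only [energyCasimir, EuclideanSpace.norm_sq_eq, Real.norm_eq_abs, sq_abs,
    Fin.sum_univ_three, Matrix.cons_val_zero, Matrix.cons_val_one, Matrix.cons_val]
  field_simp
  ring

/-- For `I₁ > I₂ > I₃ > 0`, `M₀ ≠ 0`, `x_e = (0,0,M₀)` and
`L(x) = (½‖x‖² − M₀²/2)² + ½‖x‖² − (I₃/2)(x₁²/I₁ + x₂²/I₂ + x₃²/I₃)`, one has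
`L(x_e) = 0`, `∇L(x_e) = 0`, the Hessian of `L` at `x_e` is
`diag(1 − I₃/I₁, 1 − I₃/I₂, 2M₀²)` which is positive definite, and `x_e` is a
strict local minimum of `L`. -/
theorem lyapunov_rigid_body_axis3
    (I1 I2 I3 M0 : ℝ) (h12 : I1 > I2) (h23 : I2 > I3) (h3 : I3 > 0) (hM0 : M0 ≠ 0) :
    ∀ L : EuclideanSpace ℝ (Fin 3) → ℝ,
      (L = fun x => ((1/2) * ‖x‖ ^ 2 - M0 ^ 2 / 2) ^ 2 + (1/2) * ‖x‖ ^ 2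
          - (I3/2) * ((x 0) ^ 2 / I1 + (x 1) ^ 2 / I2 + (x 2) ^ 2 / I3)) →
      ∀ xe : EuclideanSpace ℝ (Fin 3),
      xe = (WithLp.equiv 2 (Fin 3 → ℝ)).symm ![0, 0, M0] →
      L xe = 0
      ∧ gradient L xe = 0
      ∧ (∀ i j : Fin 3,
          iteratedFDeriv ℝ 2 L xe ![EuclideanSpace.single i 1, EuclideanSpace.single j 1]
            = Matrix.diagonal ![1 - I3/I1, 1 - I3/I2, 2 * M0 ^ 2] i j)
      ∧ (Matrix.diagonal ![1 - I3/I1, 1 - I3/I2, 2 * M0 ^ 2]).PosDef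
      ∧ ∃ U ∈ nhds xe, ∀ x ∈ U, x ≠ xe → L xe < L x := by
  intro L hL xe hxe
  have hA : 0 < 1 - I3 / I1 := sub_pos.2 ((div_lt_one (by linarith)).2 (by linarith))
  have hB : 0 < 1 - I3 / I2 := sub_pos.2 ((div_lt_one (by linarith)).2 h23)
  rw [rigidBodyLyapunov_eq_energyCasimir (by linarith) (by linarith) h3.ne'] at hL
  rw [WithLp.equiv_symm_apply] at hxe
  subst hL hxe
  have hnorm : ‖!₂[0, 0, M0]‖ ^ 2 / 2 = M0 ^ 2 / 2 := by
    simp [EuclideanSpace.norm_sq_eq, Fin.sum_univ_three]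
  have hcrit : ∀ i, ![1 - I3 / I1, 1 - I3 / I2, 0] i * !₂[0, 0, M0] i = 0 := by
    intro i; fin_cases i <;> simp
  have hzero : energyCasimir (M0 ^ 2 / 2) ![1 - I3 / I1, 1 - I3 / I2, 0] !₂[0, 0, M0] = 0 :=
    (energyCasimir_eq_zero_iff fun i => by fin_cases i <;> simp [hA.le, hB.le]).2
      ⟨hnorm, fun i => by rw [sq, ← mul_assoc, hcrit, zero_mul]⟩
  refine ⟨hzero, ?_, fun i j => ?_, ?_, ?_⟩
  · rw [gradient, fderiv_energyCasimir_eq_zero hnorm hcrit, map_zero]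
  · rw [iteratedFDeriv_two_energyCasimir_single _ hnorm]
    fin_cases i <;> fin_cases j <;> simp
    ring
  · exact Matrix.PosDef.diagonal fun i => by
      fin_cases i <;> simp [hA, hB]
      positivity
  · have hne_neg : !₂[0, 0, M0] ≠ -!₂[0, 0, M0] := fun h => hM0 <| self_eq_neg.1 <| by
      simpa using congrArg (fun v : EuclideanSpace ℝ (Fin 3) => v 2) h
    refine ⟨{-!₂[0, 0, M0]}ᶜ, isOpen_compl_singleton.mem_nhds hne_neg, fun x hx hne => ?_⟩
    rw [hzero]
    exact energyCasimir_pos_of_ne hA hB hne hx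
end

section
/- Let I₁ > I₂ > I₃ > 0, M₀ ≠ 0, x_e = (M₀,0,0), and L₃(x) = H(x) + C₃(x) − H(x_e) − C₃(x_e), where H(x) = ½∑xᵢ²/Iᵢ and C₃(x) = (½‖x‖² − M₀²/2)² − ½‖x‖²/I₁. Then ∇L₃(x_e) = 0 and Hess L₃(x_e) is positive definite. -/
noncomputable def rbP (i : Fin 3) : EuclideanSpace ℝ (Fin 3) →L[ℝ] ℝ :=
  EuclideanSpace.proj i

noncomputable def rbD (I1 I2 I3 M0 : ℝ) (x : EuclideanSpace ℝ (Fin 3)) :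
    EuclideanSpace ℝ (Fin 3) →L[ℝ] ℝ :=
  (x 0 * (1/I1) + (2 * ((1/2) * (x 0 * x 0 + x 1 * x 1 + x 2 * x 2) - M0^2/2) - 1/I1) * x 0) • rbP 0
  + ((x 1 * (1/I2) + (2 * ((1/2) * (x 0 * x 0 + x 1 * x 1 + x 2 * x 2) - M0^2/2) - 1/I1) * x 1) • rbP 1
  + (x 2 * (1/I3) + (2 * ((1/2) * (x 0 * x 0 + x 1 * x 1 + x 2 * x 2) - M0^2/2) - 1/I1) * x 2) • rbP 2)

set_option maxHeartbeats 2000000 in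
/-- For `I₁ > I₂ > I₃ > 0`, `M₀ ≠ 0`, `x_e = (M₀,0,0)`,
`H(x) = ½∑xᵢ²/Iᵢ`, `C₃(x) = (½‖x‖² − M₀²/2)² − ½‖x‖²/I₁` and
`L₃(x) = H(x) + C₃(x) − H(x_e) − C₃(x_e)`: `∇L₃(x_e) = 0` and the Hessian of `L₃`
at `x_e` is positive definite. -/
theorem lyapunov_rigid_body_axis1
    (I1 I2 I3 M0 : ℝ) (h12 : I1 > I2) (h23 : I2 > I3) (h3 : I3 > 0) (hM0 : M0 ≠ 0) :
    ∀ L3 : EuclideanSpace ℝ (Fin 3) → ℝ,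
      ∀ xe : EuclideanSpace ℝ (Fin 3),
      xe = (WithLp.equiv 2 (Fin 3 → ℝ)).symm ![M0, 0, 0] →
      (L3 = fun x =>
          ((1/2) * ((x 0) ^ 2 / I1 + (x 1) ^ 2 / I2 + (x 2) ^ 2 / I3)
            + (((1/2) * ‖x‖ ^ 2 - M0 ^ 2 / 2) ^ 2 - (1/2) * ‖x‖ ^ 2 / I1))
          - ((1/2) * ((xe 0) ^ 2 / I1 + (xe 1) ^ 2 / I2 + (xe 2) ^ 2 / I3)
            + (((1/2) * ‖xe‖ ^ 2 - M0 ^ 2 / 2) ^ 2 - (1/2) * ‖xe‖ ^ 2 / I1))) →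
      gradient L3 xe = 0
      ∧ (Matrix.of fun i j : Fin 3 =>
          iteratedFDeriv ℝ 2 L3 xe
            ![EuclideanSpace.single i 1, EuclideanSpace.single j 1]).PosDef := by
  intro L3 xe hxe hL3
  have hI2 : (0:ℝ) < I2 := lt_trans h3 h23
  have hI1 : (0:ℝ) < I1 := lt_trans hI2 h12
  have hx0 : xe 0 = M0 := by subst hxe; simp [WithLp.equiv_symm_apply, PiLp.toLp_apply]
  have hx1 : xe 1 = 0 := by subst hxe; simp [WithLp.equiv_symm_apply, PiLp.toLp_apply]
  have hx2 : xe 2 = 0 := by subst hxe; simp [WithLp.equiv_symm_apply, PiLp.toLp_apply]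
  have hnorm : ∀ x : EuclideanSpace ℝ (Fin 3),
      ‖x‖^2 = x 0 * x 0 + x 1 * x 1 + x 2 * x 2 := by
    intro x
    rw [EuclideanSpace.norm_eq, Real.sq_sqrt (by positivity)]
    simp [Fin.sum_univ_three, sq]
  have hL3' : L3 = fun x : EuclideanSpace ℝ (Fin 3) =>
      (1/2) * (x 0 * x 0 * (1/I1) + x 1 * x 1 * (1/I2) + x 2 * x 2 * (1/I3))
      + (((1/2) * (x 0 * x 0 + x 1 * x 1 + x 2 * x 2) - M0^2/2)
          * ((1/2) * (x 0 * x 0 + x 1 * x 1 + x 2 * x 2) - M0^2/2)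
        - (1/2) * (x 0 * x 0 + x 1 * x 1 + x 2 * x 2) * (1/I1)) := by
    funext x
    rw [hL3]
    simp only [hnorm x, hnorm xe, hx0, hx1, hx2]
    field_simp
    ring
  -- coordinate derivatives
  have hco : ∀ (i : Fin 3) (x : EuclideanSpace ℝ (Fin 3)),
      HasFDerivAt (fun y : EuclideanSpace ℝ (Fin 3) => y i) (rbP i) x :=
    fun i x => (rbP i).hasFDerivAt
  -- first derivative
  have hD : ∀ x, HasFDerivAt L3 (rbD I1 I2 I3 M0 x) x := by
    intro x
    rw [hL3']
    have h0 := hco 0 x; have h1 := hco 1 x; have h2 := hco 2 x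
    have hs := ((h0.mul h0).add (h1.mul h1)).add (h2.mul h2)
    have hq := (hs.const_mul (1/2 : ℝ)).sub_const (M0^2/2)
    have hmain := ((((h0.mul h0).mul_const (1/I1 : ℝ)).add
        ((h1.mul h1).mul_const (1/I2 : ℝ))).add
        ((h2.mul h2).mul_const (1/I3 : ℝ))).const_mul (1/2 : ℝ)
    refine ((hmain.add ((hq.mul hq).sub
        (((hs.const_mul (1/2 : ℝ))).mul_const (1/I1 : ℝ)))).congr_fderiv ?_)
    ext v
    simp [rbD, rbP]
    ring
  have hfd : fderiv ℝ L3 = rbD I1 I2 I3 M0 := funext fun x => (hD x).fderiv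
  constructor
  · have hz : fderiv ℝ L3 xe = 0 := by
      rw [hfd]
      unfold rbD
      rw [hx0, hx1, hx2]
      have e0 : M0 * (1/I1)
          + (2 * ((1/2) * (M0 * M0 + 0 * 0 + 0 * 0) - M0^2/2) - 1/I1) * M0 = 0 := by ring
      have e1 : (0:ℝ) * (1/I2)
          + (2 * ((1/2) * (M0 * M0 + 0 * 0 + 0 * 0) - M0^2/2) - 1/I1) * 0 = 0 := by ring
      have e2 : (0:ℝ) * (1/I3)
          + (2 * ((1/2) * (M0 * M0 + 0 * 0 + 0 * 0) - M0^2/2) - 1/I1) * 0 = 0 := by ring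
      rw [e0, e1, e2]
      simp
    simp [gradient, hz]
  · -- second derivative
    have h0 := hco 0 xe; have h1 := hco 1 xe; have h2 := hco 2 xe
    have hs := ((h0.mul h0).add (h1.mul h1)).add (h2.mul h2)
    have hq := (hs.const_mul (1/2 : ℝ)).sub_const (M0^2/2)
    have hc0 := ((h0.mul_const (1/I1 : ℝ)).add
      (((hq.const_mul (2:ℝ)).sub_const (1/I1)).mul h0))
    have hc1 := ((h1.mul_const (1/I2 : ℝ)).add
      (((hq.const_mul (2:ℝ)).sub_const (1/I1)).mul h1))
    have hc2 := ((h2.mul_const (1/I3 : ℝ)).add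
      (((hq.const_mul (2:ℝ)).sub_const (1/I1)).mul h2))
    have hD2 := (hc0.smul_const (rbP 0)).add
      ((hc1.smul_const (rbP 1)).add (hc2.smul_const (rbP 2)))
    have hD2' : HasFDerivAt (rbD I1 I2 I3 M0) _ xe := hD2
    have heval : ∀ u v : EuclideanSpace ℝ (Fin 3),
        fderiv ℝ (rbD I1 I2 I3 M0) xe u v
          = 2*M0^2 * (u 0 * v 0) + ((1/I2 - 1/I1) * (u 1 * v 1)
            + (1/I3 - 1/I1) * (u 2 * v 2)) := by
      intro u v
      rw [hD2'.fderiv]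
      simp [rbP, hx0, hx1, hx2]
      ring
    have hmat : (Matrix.of fun i j : Fin 3 =>
        iteratedFDeriv ℝ 2 L3 xe
          ![EuclideanSpace.single i 1, EuclideanSpace.single j 1])
        = Matrix.diagonal ![2*M0^2, 1/I2 - 1/I1, 1/I3 - 1/I1] := by
      ext i j
      rw [Matrix.of_apply, iteratedFDeriv_two_apply]
      simp only [Matrix.cons_val_zero, Matrix.cons_val_one, Matrix.head_cons]
      rw [hfd, heval]
      fin_cases i <;> fin_cases j <;>
        simp [EuclideanSpace.single_apply, Matrix.diagonal]
    rw [hmat]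
    refine Matrix.posDef_diagonal_iff.mpr ?_
    intro i
    fin_cases i <;> simp
    · positivity
    · exact inv_strictAnti₀ hI2 h12
    · exact inv_strictAnti₀ h3 (lt_trans h23 h12)
end

section
/- Let f ∈ C¹(ℝⁿ, ℝⁿ), x_e an equilibrium (f(x_e) = 0), U a compact neighborhood of x_e, and L : U → ℝ a C¹ function with L(x_e) = 0, L(x) > 0 for x ∈ U \ {x_e}, and ∇L(x)·f(x) ≤ 0 on U. Let E = {x ∈ U : ∇L(x)·f(x) = 0} and M the largest invariant set of the flow contained in E. Then there is a neighborhood V ⊆ U of x_e such that for every x ∈ V, the ω-limit set ω(x) of the flow of ẋ = f(x) is contained in M. -/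
open RealInnerProductSpace Filter

/-!
Along trajectories `L` is nonincreasing, and `L ≥ m > 0` on a small sphere around `xe` inside `U`,
so a trajectory starting inside that sphere with `L < m` never reaches it. Along such a trapped
trajectory `L (φ t x)` decreases to a limit `l`. By Gronwall's estimate, applied forward and
backward in time, the whole orbit of an ω-limit point `y` consists of ω-limit points, so
`L ≡ l` on it; differentiating `L` along the orbit gives `⟪∇L, f⟫ = 0` there. Hence the orbit of
`y` is an invariant subset of `E`, so it lies in `M`.
-/

open Set Metric Topology

theorem mapsTo_Icc_of_forall_mapsTo_Icc_imp {X : Type*} [TopologicalSpace X] {g : ℝ → X}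
    (hg : Continuous g) {C O : Set X} (hC : IsClosed C) (hO : IsOpen O) (hOC : O ⊆ C)
    {a b : ℝ} (ha : g a ∈ C) (hstep : ∀ t ∈ Icc a b, MapsTo g (Icc a t) C → g t ∈ O) :
    MapsTo g (Icc a b) C := by
  by_contra hexit
  set bad := Icc a b ∩ g ⁻¹' Cᶜ
  have hbad : bad.Nonempty := by
    obtain ⟨t, ht, htC⟩ := not_forall₂.1 hexit
    exact ⟨t, ht, htC⟩
  have hbdd : BddBelow bad := ⟨a, fun t ht => ht.1.1⟩
  set T := sInf bad
  have hTcl : T ∈ closure bad := csInf_mem_closure hbad hbdd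
  have hT : T ∈ Icc a b := closure_minimal inter_subset_left isClosed_Icc hTcl
  have hbefore : MapsTo g (Ico a T) C := fun r hr => by
    by_contra hrC
    exact (csInf_le hbdd ⟨⟨hr.1, hr.2.le.trans hT.2⟩, hrC⟩).not_gt hr.2
  have hupto : MapsTo g (Icc a T) C := by
    rcases hT.1.eq_or_lt with haT | haT
    · rw [← haT, Icc_self]
      exact mapsTo_singleton.2 ha
    · rw [← closure_Ico haT.ne]
      exact (hC.preimage hg).closure_subset_iff.2 hbefore
  obtain ⟨r, hrO, hrbad⟩ := mem_closure_iff_nhds.1 hTcl _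
    (hg.continuousAt.preimage_mem_nhds (hO.mem_nhds (hstep T hT hupto)))
  exact hrbad.2 (hOC hrO)

section ODE

variable {E : Type*} [NormedAddCommGroup E] [NormedSpace ℝ E]

theorem ODE_solution_unique_univ_of_contDiff {f : E → E} (hf : ContDiff ℝ 1 f) {α β : ℝ → E}
    (hα : ∀ t, HasDerivAt α (f (α t)) t) (hβ : ∀ t, HasDerivAt β (f (β t)) t) {t₀ : ℝ}
    (heq : α t₀ = β t₀) : α = β := by
  have hαc : Continuous α := continuous_iff_continuousAt.2 fun t => (hα t).continuousAt
  have hβc : Continuous β := continuous_iff_continuousAt.2 fun t => (hβ t).continuousAt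
  ext1 t
  obtain ⟨A, B, ht, ht₀⟩ : ∃ A B, t ∈ Ioo A B ∧ t₀ ∈ Ioo A B :=
    ⟨min t t₀ - 1, max t t₀ + 1, ⟨by grind, by grind⟩, by grind, by grind⟩
  -- `f` is only locally Lipschitz, but on `[A, B]` both solutions stay in a compact set
  obtain ⟨K, hK⟩ := hf.locallyLipschitz.locallyLipschitzOn.exists_lipschitzOnWith_of_compact
    ((isCompact_Icc.image hαc).union (isCompact_Icc.image hβc))
  exact ODE_solution_unique_of_mem_Ioo (v := fun _ => f) (fun _ _ => hK) ht₀
    (fun s hs => ⟨hα s, .inl (mem_image_of_mem α (Ioo_subset_Icc_self hs))⟩)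
    (fun s hs => ⟨hβ s, .inr (mem_image_of_mem β (Ioo_subset_Icc_self hs))⟩) heq ht

variable {v : E → E} {K : NNReal} {C S : Set E} {g : ℝ → E} {gk : ℕ → ℝ → E} {a b : ℝ}

theorem tendsto_of_lipschitzOnWith_of_tendsto_left (hv : LipschitzOnWith K v C)
    (hg : ∀ t, HasDerivAt g (v (g t)) t) (hgk : ∀ k t, HasDerivAt (gk k) (v (gk k t)) t)
    (hgC : MapsTo g (Icc a b) C) (hgkC : ∀ᶠ k in atTop, MapsTo (gk k) (Icc a b) C)
    (ha : Tendsto (fun k => gk k a) atTop (𝓝 (g a))) :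
    ∀ t ∈ Icc a b, Tendsto (fun k => gk k t) atTop (𝓝 (g t)) := by
  intro t ht
  have hdist : ∀ᶠ k in atTop,
      dist (gk k t) (g t) ≤ dist (gk k a) (g a) * Real.exp (K * (t - a)) :=
    hgkC.mono fun k hk => dist_le_of_trajectories_ODE_of_mem (v := fun _ => v) (s := fun _ => C)
      (fun _ _ => hv) (fun s _ => (hgk k s).continuousAt.continuousWithinAt)
      (fun s _ => (hgk k s).hasDerivWithinAt) (fun s hs => hk (Ico_subset_Icc_self hs))
      (fun s _ => (hg s).continuousAt.continuousWithinAt) (fun s _ => (hg s).hasDerivWithinAt)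
      (fun s hs => hgC (Ico_subset_Icc_self hs)) le_rfl t ht
  have hbound : Tendsto (fun k => dist (gk k a) (g a) * Real.exp (K * (t - a))) atTop (𝓝 0) := by
    simpa using (tendsto_iff_dist_tendsto_zero.1 ha).mul_const (Real.exp (K * (t - a)))
  exact tendsto_iff_dist_tendsto_zero.2
    (squeeze_zero' (.of_forall fun _ => dist_nonneg) hdist hbound)

theorem mem_and_tendsto_of_lipschitzOnWith_of_tendsto_left (hv : LipschitzOnWith K v C)
    (hC : IsClosed C) (hS : IsClosed S) (hSC : S ⊆ interior C)
    (hg : ∀ t, HasDerivAt g (v (g t)) t) (hgk : ∀ k t, HasDerivAt (gk k) (v (gk k t)) t)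
    (hgkS : ∀ᶠ k in atTop, MapsTo (gk k) (Icc a b) S)
    (ha : Tendsto (fun k => gk k a) atTop (𝓝 (g a))) :
    ∀ t ∈ Icc a b, g t ∈ S ∧ Tendsto (fun k => gk k t) atTop (𝓝 (g t)) := by
  have hlim : ∀ t ∈ Icc a b, MapsTo g (Icc a t) C →
      g t ∈ S ∧ Tendsto (fun k => gk k t) atTop (𝓝 (g t)) := fun t ht hgC => by
    have hgkC : ∀ᶠ k in atTop, MapsTo (gk k) (Icc a t) C := hgkS.mono fun k hk =>
      (hk.mono_left (Icc_subset_Icc_right ht.2)).mono_right (hSC.trans interior_subset)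
    have htend := tendsto_of_lipschitzOnWith_of_tendsto_left hv hg hgk hgC hgkC ha t
      (right_mem_Icc.2 ht.1)
    exact ⟨hS.mem_of_tendsto htend (hgkS.mono fun k hk => hk ht), htend⟩
  intro t ht
  have hgc : Continuous g := continuous_iff_continuousAt.2 fun t => (hg t).continuousAt
  have hga : g a ∈ C := interior_subset <| hSC <|
    hS.mem_of_tendsto ha (hgkS.mono fun k hk => hk (left_mem_Icc.2 (ht.1.trans ht.2)))
  have hgC := mapsTo_Icc_of_forall_mapsTo_Icc_imp hgc hC isOpen_interior interior_subset hga
    fun s hs hgC => hSC (hlim s hs hgC).1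
  exact hlim t ht (hgC.mono_left (Icc_subset_Icc_right ht.2))

variable {f : E → E} {φ : ℝ → E → E}

theorem flow_flow_eq_flow_add (hf : ContDiff ℝ 1 f) (hφ0 : ∀ x, φ 0 x = x)
    (hφ : ∀ x t, HasDerivAt (fun s => φ s x) (f (φ t x)) t) (x : E) (s t : ℝ) :
    φ s (φ t x) = φ (t + s) x :=
  congrFun (ODE_solution_unique_univ_of_contDiff hf (hφ (φ t x))
    (fun r => (hφ x (t + r)).comp_const_add t r) (t₀ := 0) (by rw [hφ0, add_zero])) s

theorem isInvariant_range_flow (hf : ContDiff ℝ 1 f) (hφ0 : ∀ x, φ 0 x = x)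
    (hφ : ∀ x t, HasDerivAt (fun s => φ s x) (f (φ t x)) t) (x : E) :
    IsInvariant φ (range fun t => φ t x) := by
  rintro s _ ⟨t, rfl⟩
  exact ⟨t + s, (flow_flow_eq_flow_add hf hφ0 hφ x s t).symm⟩

theorem flow_mem_and_tendsto_of_tendsto_flow (hv : LipschitzOnWith K f C) (hC : IsClosed C)
    (hS : IsClosed S) (hSC : S ⊆ interior C) (hφ0 : ∀ x, φ 0 x = x)
    (hφ : ∀ x t, HasDerivAt (fun s => φ s x) (f (φ t x)) t) {x y : E}
    (hx : ∀ t ≥ 0, φ t x ∈ S) {u : ℕ → ℝ} (hu : Tendsto u atTop atTop)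
    (hy : Tendsto (fun k => φ (u k) x) atTop (𝓝 y)) (t : ℝ) :
    φ t y ∈ S ∧ Tendsto (fun k => φ (u k + t) x) atTop (𝓝 (φ t y)) := by
  rcases le_total 0 t with ht | ht
  · have hgkS : ∀ᶠ k in atTop, MapsTo (fun s => φ (u k + s) x) (Icc 0 t) S :=
      (hu.eventually_ge_atTop 0).mono fun k hk s hs => hx _ (add_nonneg hk hs.1)
    exact mem_and_tendsto_of_lipschitzOnWith_of_tendsto_left hv hC hS hSC (hφ y)
      (fun k r => (hφ x (u k + r)).comp_const_add (u k) r) hgkS (by simpa [hφ0] using hy) t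
      ⟨ht, le_rfl⟩
  · -- backward in time, `s ↦ φ (u k - s) x` solves the reversed equation `ẋ = -f x`
    have hv' : LipschitzOnWith K (fun z => -f z) C := fun z hz w hw => by
      simpa only [edist_neg_neg] using hv hz hw
    have hgkS : ∀ᶠ k in atTop, MapsTo (fun s => φ (u k - s) x) (Icc 0 (-t)) S :=
      (hu.eventually_ge_atTop (-t)).mono fun k hk s hs => hx _ (by linarith [hs.2])
    have := mem_and_tendsto_of_lipschitzOnWith_of_tendsto_left hv' hC hS hSC
      (fun r => (hφ y (0 - r)).comp_const_sub 0 r)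
      (fun k r => (hφ x (u k - r)).comp_const_sub (u k) r) hgkS (by simpa [hφ0] using hy) (-t)
      ⟨neg_nonneg.2 ht, le_rfl⟩
    simpa [sub_eq_add_neg] using this

end ODE

theorem AntitoneOn.exists_tendsto_atTop_of_bddBelow {h : ℝ → ℝ} {a : ℝ}
    (hh : AntitoneOn h (Ici a)) (hb : BddBelow (h '' Ici a)) : ∃ l, Tendsto h atTop (𝓝 l) := by
  obtain ⟨c, hc⟩ := hb
  have hanti : Antitone fun t => h (max t a) := fun s t hst =>
    hh (le_max_right s a) (le_max_right t a) (max_le_max_right a hst)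
  refine ⟨_, (tendsto_atTop_ciInf hanti ⟨c, ?_⟩).congr' ?_⟩
  · rintro _ ⟨t, rfl⟩
    exact hc (mem_image_of_mem h (le_max_right t a))
  · filter_upwards [eventually_ge_atTop a] with t ht
    rw [max_eq_left ht]

section Lyapunov

variable {F : Type*} [NormedAddCommGroup F] [InnerProductSpace ℝ F] [CompleteSpace F]
  {f : F → F} {L : F → ℝ}

theorem DifferentiableAt.hasDerivAt_comp_inner_gradient {γ : ℝ → F} {t : ℝ} {γ' : F}
    (hL : DifferentiableAt ℝ L (γ t)) (hγ : HasDerivAt γ γ' t) :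
    HasDerivAt (fun s => L (γ s)) ⟪gradient L (γ t), γ'⟫ t := by
  have := hL.hasFDerivAt.comp_hasDerivAt t hγ
  rwa [hL.hasGradientAt.fderiv_apply] at this

theorem antitoneOn_comp_of_inner_gradient_nonpos {γ : ℝ → F} {a b : ℝ}
    (hγ : ∀ t, HasDerivAt γ (f (γ t)) t) (hL : ∀ t ∈ Icc a b, DifferentiableAt ℝ L (γ t))
    (hdec : ∀ t ∈ Icc a b, ⟪gradient L (γ t), f (γ t)⟫ ≤ 0) :
    AntitoneOn (fun t => L (γ t)) (Icc a b) := by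
  have hderiv : ∀ t ∈ Icc a b, HasDerivAt (fun s => L (γ s)) ⟪gradient L (γ t), f (γ t)⟫ t :=
    fun t ht => (hL t ht).hasDerivAt_comp_inner_gradient (hγ t)
  refine antitoneOn_of_deriv_nonpos (convex_Icc a b)
    (fun t ht => (hderiv t ht).continuousAt.continuousWithinAt)
    (fun t ht => (hderiv t (interior_subset ht)).differentiableAt.differentiableWithinAt)
    fun t ht => ?_
  rw [(hderiv t (interior_subset ht)).deriv]
  exact hdec t (interior_subset ht)

theorem mem_closedBall_of_lt_of_forall_sphere_le {γ : ℝ → F} {p : F} {ε m : ℝ}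
    (hγ : ∀ t, HasDerivAt γ (f (γ t)) t) (hL : ∀ z ∈ closedBall p ε, DifferentiableAt ℝ L z)
    (hdec : ∀ z ∈ closedBall p ε, ⟪gradient L z, f z⟫ ≤ 0) (hm : ∀ z ∈ sphere p ε, m ≤ L z)
    (hγ0 : γ 0 ∈ ball p ε) (hLγ0 : L (γ 0) < m) {t : ℝ} (ht : 0 ≤ t) :
    γ t ∈ closedBall p ε := by
  have hγc : Continuous γ := continuous_iff_continuousAt.2 fun t => (hγ t).continuousAt
  refine mapsTo_Icc_of_forall_mapsTo_Icc_imp hγc isClosed_closedBall isOpen_ball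
    ball_subset_closedBall (ball_subset_closedBall hγ0) (fun s hs hball => ?_) ⟨ht, le_rfl⟩
  have hLs : L (γ s) < m := (antitoneOn_comp_of_inner_gradient_nonpos hγ
    (fun r hr => hL _ (hball hr)) (fun r hr => hdec _ (hball hr)) (left_mem_Icc.2 hs.1)
    (right_mem_Icc.2 hs.1) hs.1).trans_lt hLγ0
  rw [← closedBall_sdiff_sphere]
  exact ⟨hball (right_mem_Icc.2 hs.1), fun hsph => (hm _ hsph).not_gt hLs⟩

variable {φ : ℝ → F → F} {K : NNReal} {C S : Set F}

theorem flow_mem_and_inner_gradient_eq_zero_of_tendsto_flow (hv : LipschitzOnWith K f C)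
    (hC : IsClosed C) (hS : IsClosed S) (hSC : S ⊆ interior C) (hφ0 : ∀ x, φ 0 x = x)
    (hφ : ∀ x t, HasDerivAt (fun s => φ s x) (f (φ t x)) t)
    (hL : ∀ z ∈ S, DifferentiableAt ℝ L z) (hdec : ∀ z ∈ S, ⟪gradient L z, f z⟫ ≤ 0)
    (hLS : BddBelow (L '' S)) {x y : F} (hx : ∀ t ≥ 0, φ t x ∈ S) {u : ℕ → ℝ}
    (hu : Tendsto u atTop atTop) (hy : Tendsto (fun k => φ (u k) x) atTop (𝓝 y)) (t : ℝ) :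
    φ t y ∈ S ∧ ⟪gradient L (φ t y), f (φ t y)⟫ = 0 := by
  have hω := flow_mem_and_tendsto_of_tendsto_flow hv hC hS hSC hφ0 hφ hx hu hy
  obtain ⟨l, hl⟩ : ∃ l, Tendsto (fun s => L (φ s x)) atTop (𝓝 l) := by
    refine AntitoneOn.exists_tendsto_atTop_of_bddBelow (a := 0) (fun r hr s hs hrs => ?_)
      (hLS.mono (by rintro _ ⟨s, hs, rfl⟩; exact mem_image_of_mem L (hx s hs)))
    exact antitoneOn_comp_of_inner_gradient_nonpos (hφ x) (fun t ht => hL _ (hx t ht.1))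
      (fun t ht => hdec _ (hx t ht.1)) ⟨hr, hrs⟩ ⟨hs, le_rfl⟩ hrs
  have hconst : (fun s => L (φ s y)) = fun _ => l := funext fun s =>
    tendsto_nhds_unique ((hL _ (hω s).1).continuousAt.tendsto.comp (hω s).2)
      (hl.comp (tendsto_atTop_add_const_right _ s hu))
  have hderiv := (hL _ (hω t).1).hasDerivAt_comp_inner_gradient (hφ y t)
  rw [hconst] at hderiv
  exact ⟨(hω t).1, hderiv.unique (hasDerivAt_const t l)⟩

theorem flow_mem_closedBall_and_inner_gradient_eq_zero [ProperSpace F] {p : F} {ε ε' m : ℝ}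
    (hεε' : ε < ε') (hv : LipschitzOnWith K f (closedBall p ε')) (hφ0 : ∀ x, φ 0 x = x)
    (hφ : ∀ x t, HasDerivAt (fun s => φ s x) (f (φ t x)) t)
    (hL : ∀ z ∈ closedBall p ε, DifferentiableAt ℝ L z)
    (hdec : ∀ z ∈ closedBall p ε, ⟪gradient L z, f z⟫ ≤ 0) (hm : ∀ z ∈ sphere p ε, m ≤ L z)
    {x y : F} (hx : x ∈ ball p ε) (hLx : L x < m) {u : ℕ → ℝ} (hu : Tendsto u atTop atTop)
    (hy : Tendsto (fun k => φ (u k) x) atTop (𝓝 y)) (t : ℝ) :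
    φ t y ∈ closedBall p ε ∧ ⟪gradient L (φ t y), f (φ t y)⟫ = 0 :=
  flow_mem_and_inner_gradient_eq_zero_of_tendsto_flow hv isClosed_closedBall isClosed_closedBall
    ((closedBall_subset_ball hεε').trans (isOpen_ball.subset_interior_iff.2 ball_subset_closedBall))
    hφ0 hφ hL hdec
    ((isCompact_closedBall p ε).bddBelow_image fun z hz =>
      (hL z hz).continuousAt.continuousWithinAt)
    (fun _ ht => mem_closedBall_of_lt_of_forall_sphere_le (hφ x) hL hdec hm (by rwa [hφ0])
      (by rwa [hφ0]) ht) hu hy t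

end Lyapunov

theorem local_lasalle_invariance_general
    (n : ℕ) (f : EuclideanSpace ℝ (Fin n) → EuclideanSpace ℝ (Fin n))
    (hf : ContDiff ℝ 1 f)
    (xe : EuclideanSpace ℝ (Fin n))
    (U : Set (EuclideanSpace ℝ (Fin n))) (hUnhds : U ∈ nhds xe)
    (L : EuclideanSpace ℝ (Fin n) → ℝ) (hL : ContDiffOn ℝ 1 L U)
    (hL0 : L xe = 0) (hLpos : ∀ x ∈ U, x ≠ xe → 0 < L x)
    (hLdec : ∀ x ∈ U, ⟪gradient L x, f x⟫ ≤ 0)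
    (φ : ℝ → EuclideanSpace ℝ (Fin n) → EuclideanSpace ℝ (Fin n))
    (hφ0 : ∀ x, φ 0 x = x)
    (hφflow : ∀ x t, HasDerivAt (fun s => φ s x) (f (φ t x)) t)
    (Eset : Set (EuclideanSpace ℝ (Fin n)))
    (hEset : Eset = {x ∈ U | ⟪gradient L x, f x⟫ = 0})
    (M : Set (EuclideanSpace ℝ (Fin n)))
    (hM : M = ⋃₀ {S | S ⊆ Eset ∧ ∀ x ∈ S, ∀ t : ℝ, φ t x ∈ S}) :
    ∃ V ∈ nhds xe, V ⊆ U ∧ ∀ x ∈ V,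
      {y | ∃ u : ℕ → ℝ, Tendsto u atTop atTop ∧
        Tendsto (fun k => φ (u k) x) atTop (nhds y)} ⊆ M := by
  obtain ⟨ε', hε', hε'U⟩ := nhds_basis_closedBall.mem_iff.1 (interior_mem_nhds.2 hUnhds)
  set ε := ε' / 2
  have hε : 0 < ε := half_pos hε'
  have hεU : closedBall xe ε ⊆ interior U :=
    (closedBall_subset_closedBall (half_le_self hε'.le)).trans hε'U
  have hLdiff : ∀ z ∈ interior U, DifferentiableAt ℝ L z := fun z hz =>
    (hL.contDiffAt (mem_interior_iff_mem_nhds.1 hz)).differentiableAt one_ne_zero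
  obtain ⟨K, hK⟩ := hf.locallyLipschitz.locallyLipschitzOn.exists_lipschitzOnWith_of_compact
    (isCompact_closedBall xe ε')
  obtain ⟨m, hm, hmL⟩ := (isCompact_sphere xe ε).exists_forall_le'
    (hL.continuousOn.mono (sphere_subset_closedBall.trans (hεU.trans interior_subset)))
    fun z hz => hLpos z (interior_subset (hεU (sphere_subset_closedBall hz)))
      (ne_of_mem_sphere hz hε.ne')
  refine ⟨ball xe ε ∩ L ⁻¹' Iio m, inter_mem (ball_mem_nhds xe hε)
    ((hLdiff xe (mem_interior_iff_mem_nhds.2 hUnhds)).continuousAt.preimage_mem_nhds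
      (Iio_mem_nhds (hL0 ▸ hm))),
    fun z hz => interior_subset (hεU (ball_subset_closedBall hz.1)), ?_⟩
  rintro x ⟨hxε, hxm⟩ y ⟨u, hu, hy⟩
  have horbit := flow_mem_closedBall_and_inner_gradient_eq_zero (half_lt_self hε') hK hφ0 hφflow
    (fun z hz => hLdiff z (hεU hz)) (fun z hz => hLdec z (interior_subset (hεU hz))) hmL hxε hxm
    hu hy
  rw [hM]
  refine ⟨range fun t => φ t y, ⟨?_, fun z hz t => isInvariant_range_flow hf hφ0 hφflow y t hz⟩,
    0, hφ0 y⟩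
  rintro _ ⟨t, rfl⟩
  rw [hEset]
  exact ⟨interior_subset (hεU (horbit t).1), (horbit t).2⟩

/-- local LaSalle invariance theorem: Let `f` be `C¹`, `x_e` an equilibrium,
`U` a compact neighborhood of `x_e`, and `L` a `C¹` Lyapunov function on `U` with
`L(x_e) = 0`, `L > 0` on `U \ {x_e}` and `∇L·f ≤ 0` on `U`. Let
`E = {x ∈ U : ∇L(x)·f(x) = 0}` and `M` the largest invariant set of the flow `φ` of `f`
contained in `E`. Assuming solutions starting near `x_e` stay in `U` for all `t ≥ 0`,
there is a neighborhood `V ⊆ U` of `x_e` such that for every `x ∈ V` the ω-limit set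
of `x` is contained in `M`. -/
theorem local_lasalle_invariance
    (n : ℕ) (f : EuclideanSpace ℝ (Fin n) → EuclideanSpace ℝ (Fin n))
    (hf : ContDiff ℝ 1 f)
    (xe : EuclideanSpace ℝ (Fin n)) (hxe : f xe = 0)
    (U : Set (EuclideanSpace ℝ (Fin n))) (hUcomp : IsCompact U) (hUnhds : U ∈ nhds xe)
    (L : EuclideanSpace ℝ (Fin n) → ℝ) (hL : ContDiffOn ℝ 1 L U)
    (hL0 : L xe = 0) (hLpos : ∀ x ∈ U, x ≠ xe → 0 < L x)
    (hLdec : ∀ x ∈ U, ⟪gradient L x, f x⟫ ≤ 0)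
    (φ : ℝ → EuclideanSpace ℝ (Fin n) → EuclideanSpace ℝ (Fin n))
    (hφ0 : ∀ x, φ 0 x = x)
    (hφflow : ∀ x t, HasDerivAt (fun s => φ s x) (f (φ t x)) t)
    (hstay : ∃ W ∈ nhds xe, ∀ x ∈ W, ∀ t ≥ (0 : ℝ), φ t x ∈ U)
    (Eset : Set (EuclideanSpace ℝ (Fin n)))
    (hEset : Eset = {x ∈ U | ⟪gradient L x, f x⟫ = 0})
    (M : Set (EuclideanSpace ℝ (Fin n)))
    (hM : M = ⋃₀ {S | S ⊆ Eset ∧ ∀ x ∈ S, ∀ t : ℝ, φ t x ∈ S}) :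
    ∃ V ∈ nhds xe, V ⊆ U ∧ ∀ x ∈ V,
      {y | ∃ u : ℕ → ℝ, Tendsto u atTop atTop ∧
        Tendsto (fun k => φ (u k) x) atTop (nhds y)} ⊆ M :=
  local_lasalle_invariance_general n f hf xe U hUnhds L hL hL0 hLpos hLdec φ hφ0 hφflow Eset hEset M
    hM
end
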